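/- Soundness of balanced derivations: if ⟨σ, s, π⟩ →* ⟨σ', skip, π⟩ is a balanced derivation in the stack-based small-step semantics (i.e., every intermediate stack equals or extends π), then ⟨σ, s⟩ ⇓ σ' holds in the big-step semantics. -/
import Mathlib


/-- Janus reversible assignment operators: `+=`, `-=`, `^=`. -/
inductive Op where
  | add | sub | xor
deriving DecidableEq

/-- The operator inverter `I_op`. -/
def Op.inv : Op → Op
  | .add => .sub
  | .sub => .add
  | .xor => .xor

/-- Interpretation of the operators on integers. -/
def Op.apply : Op → Int → Int → Int
  | .add, a, b => a + b
  | .sub, a, b => a - b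
  | .xor, a, b => Int.xor a b

/-- Storage locations: plain variables and indexed array cells. -/
inductive Loc where
  | var (x : String)
  | arr (x : String) (i : Int)
deriving DecidableEq

/-- A store maps variable names and indexed variable names to values. -/
def Store := Loc → Int

def Store.update (σ : Store) (l : Loc) (v : Int) : Store :=
  fun l' => if l' = l then v else σ l'

/-- The empty store maps every variable to zero. -/
def emptyStore : Store := fun _ => 0

/-- Janus expressions. Binary operators are modelled by their interpretation. -/
inductive Expr where
  | const (c : Int)
  | var (x : String)
  | arr (x : String) (e : Expr)
  | bop (f : Int → Int → Int) (e1 e2 : Expr)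

/-- Evaluation of expressions (a deterministic function of the store). -/
def Expr.eval (σ : Store) : Expr → Int
  | .const c => c
  | .var x => σ (.var x)
  | .arr x e => σ (.arr x (Expr.eval σ e))
  | .bop f e1 e2 => f (Expr.eval σ e1) (Expr.eval σ e2)
/-- Janus statements. -/
inductive Stmt where
  | assign (x : String) (op : Op) (e : Expr)
  | assignArr (x : String) (ei : Expr) (op : Op) (e : Expr)
  | cond (e1 : Expr) (s1 s2 : Stmt) (e2 : Expr)
  | loop (e1 : Expr) (s1 s2 : Stmt) (e2 : Expr)
  | call (id : String)
  | uncall (id : String)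
  | skip
  | seq (s1 s2 : Stmt)

/-- The Janus statement inverter `I`. -/
def Stmt.inv : Stmt → Stmt
  | .assign x op e => .assign x op.inv e
  | .assignArr x ei op e => .assignArr x ei op.inv e
  | .cond e1 s1 s2 e2 => .cond e2 s1.inv s2.inv e1
  | .loop e1 s1 s2 e2 => .loop e2 s1.inv s2.inv e1
  | .call id => .uncall id
  | .uncall id => .call id
  | .skip => .skip
  | .seq s1 s2 => .seq s2.inv s1.inv
mutual
/-- Big-step semantics of Janus, `⟨σ, s⟩ ⇓ σ'`. -/
inductive BigStep (Γ : String → Stmt) : Store → Stmt → Store → Prop where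
  | assVar {σ : Store} {x : String} {op : Op} {e : Expr} :
      BigStep Γ σ (.assign x op e)
        (σ.update (.var x) (op.apply (σ (.var x)) (e.eval σ)))
  | assArr {σ : Store} {x : String} {ei e : Expr} {op : Op} :
      BigStep Γ σ (.assignArr x ei op e)
        (σ.update (.arr x (ei.eval σ)) (op.apply (σ (.arr x (ei.eval σ))) (e.eval σ)))
  | call {σ σ' : Store} {id : String} :
      BigStep Γ σ (Γ id) σ' → BigStep Γ σ (.call id) σ'
  | uncall {σ σ' : Store} {id : String} :
      BigStep Γ σ (Γ id).inv σ' → BigStep Γ σ (.uncall id) σ'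
  | seq {σ σ' σ'' : Store} {s1 s2 : Stmt} :
      BigStep Γ σ s1 σ' → BigStep Γ σ' s2 σ'' → BigStep Γ σ (.seq s1 s2) σ''
  | ifTrue {σ σ' : Store} {e1 e2 : Expr} {s1 s2 : Stmt} :
      e1.eval σ ≠ 0 → BigStep Γ σ s1 σ' → e2.eval σ' ≠ 0 →
      BigStep Γ σ (.cond e1 s1 s2 e2) σ'
  | ifFalse {σ σ' : Store} {e1 e2 : Expr} {s1 s2 : Stmt} :
      e1.eval σ = 0 → BigStep Γ σ s2 σ' → e2.eval σ' = 0 →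
      BigStep Γ σ (.cond e1 s1 s2 e2) σ'
  | loopMain {σ σ' σ'' : Store} {e1 e2 : Expr} {s1 s2 : Stmt} :
      e1.eval σ ≠ 0 → BigStep Γ σ s1 σ' → BigLoop Γ σ' e1 s1 s2 e2 σ'' →
      BigStep Γ σ (.loop e1 s1 s2 e2) σ''
  | skip {σ : Store} : BigStep Γ σ .skip σ

/-- Big-step loop-iteration judgement on tuples `(e1, s1, e2, s2)`,
`⟨σ, (e1,s1,e2,s2)⟩ ⇓ σ'`. -/
inductive BigLoop (Γ : String → Stmt) : Store → Expr → Stmt → Stmt → Expr → Store → Prop where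
  | base {σ : Store} {e1 e2 : Expr} {s1 s2 : Stmt} :
      e2.eval σ ≠ 0 → BigLoop Γ σ e1 s1 s2 e2 σ
  | step {σ σ' σ'' σ''' : Store} {e1 e2 : Expr} {s1 s2 : Stmt} :
      e2.eval σ = 0 → BigStep Γ σ s2 σ' → e1.eval σ' = 0 → BigStep Γ σ' s1 σ'' →
      BigLoop Γ σ'' e1 s1 s2 e2 σ''' → BigLoop Γ σ e1 s1 s2 e2 σ'''
end
/-- Stack elements of the stack-based small-step semantics. -/
inductive Frame where
  | seq (s : Stmt)
  | ifTrue (e : Expr)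
  | ifFalse (e : Expr)
  | loop1 (e1 : Expr) (s1 s2 : Stmt) (e2 : Expr)
  | loop2 (e1 : Expr) (s1 s2 : Stmt) (e2 : Expr)

/-- Configurations `⟨σ, s, π⟩` of the stack-based small-step semantics. -/
structure Config where
  store : Store
  stmt : Stmt
  stack : List Frame

/-- The stack-based small-step semantics of Janus. -/
inductive Step (Γ : String → Stmt) : Config → Config → Prop where
  | assVar {σ : Store} {x : String} {op : Op} {e : Expr} {π : List Frame} :
      Step Γ ⟨σ, .assign x op e, π⟩
        ⟨σ.update (.var x) (op.apply (σ (.var x)) (e.eval σ)), .skip, π⟩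
  | assArr {σ : Store} {x : String} {ei e : Expr} {op : Op} {π : List Frame} :
      Step Γ ⟨σ, .assignArr x ei op e, π⟩
        ⟨σ.update (.arr x (ei.eval σ)) (op.apply (σ (.arr x (ei.eval σ))) (e.eval σ)), .skip, π⟩
  | call {σ : Store} {id : String} {π : List Frame} :
      Step Γ ⟨σ, .call id, π⟩ ⟨σ, Γ id, π⟩
  | uncall {σ : Store} {id : String} {π : List Frame} :
      Step Γ ⟨σ, .uncall id, π⟩ ⟨σ, (Γ id).inv, π⟩
  | seq1 {σ : Store} {s1 s2 : Stmt} {π : List Frame} :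
      Step Γ ⟨σ, .seq s1 s2, π⟩ ⟨σ, s1, .seq s2 :: π⟩
  | seq2 {σ : Store} {s2 : Stmt} {π : List Frame} :
      Step Γ ⟨σ, .skip, .seq s2 :: π⟩ ⟨σ, s2, π⟩
  | ifTrue1 {σ : Store} {e1 e2 : Expr} {s1 s2 : Stmt} {π : List Frame} :
      e1.eval σ ≠ 0 →
      Step Γ ⟨σ, .cond e1 s1 s2 e2, π⟩ ⟨σ, s1, .ifTrue e2 :: π⟩
  | ifTrue2 {σ : Store} {e2 : Expr} {π : List Frame} :
      e2.eval σ ≠ 0 →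
      Step Γ ⟨σ, .skip, .ifTrue e2 :: π⟩ ⟨σ, .skip, π⟩
  | ifFalse1 {σ : Store} {e1 e2 : Expr} {s1 s2 : Stmt} {π : List Frame} :
      e1.eval σ = 0 →
      Step Γ ⟨σ, .cond e1 s1 s2 e2, π⟩ ⟨σ, s2, .ifFalse e2 :: π⟩
  | ifFalse2 {σ : Store} {e2 : Expr} {π : List Frame} :
      e2.eval σ = 0 →
      Step Γ ⟨σ, .skip, .ifFalse e2 :: π⟩ ⟨σ, .skip, π⟩
  | loopMain {σ : Store} {e1 e2 : Expr} {s1 s2 : Stmt} {π : List Frame} :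
      e1.eval σ ≠ 0 →
      Step Γ ⟨σ, .loop e1 s1 s2 e2, π⟩ ⟨σ, s1, .loop1 e1 s1 s2 e2 :: π⟩
  | loopBase {σ : Store} {e1 e2 : Expr} {s1 s2 : Stmt} {π : List Frame} :
      e2.eval σ ≠ 0 →
      Step Γ ⟨σ, .skip, .loop1 e1 s1 s2 e2 :: π⟩ ⟨σ, .skip, π⟩
  | loop1 {σ : Store} {e1 e2 : Expr} {s1 s2 : Stmt} {π : List Frame} :
      e2.eval σ = 0 →
      Step Γ ⟨σ, .skip, .loop1 e1 s1 s2 e2 :: π⟩ ⟨σ, s2, .loop2 e1 s1 s2 e2 :: π⟩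
  | loop2 {σ : Store} {e1 e2 : Expr} {s1 s2 : Stmt} {π : List Frame} :
      e1.eval σ = 0 →
      Step Γ ⟨σ, .skip, .loop2 e1 s1 s2 e2 :: π⟩ ⟨σ, s1, .loop1 e1 s1 s2 e2 :: π⟩
/-- `PathP R P c c'` : there is an `R`-derivation from `c` to `c'` all of whose
configurations except possibly the last one satisfy the invariant `P`
(used to express *balanced* and *loop* derivations via conditions on the
intermediate stacks). -/
inductive PathP (R : Config → Config → Prop) (P : Config → Prop) : Config → Config → Prop where
  | refl (c : Config) : PathP R P c c
  | head {c c' c'' : Config} : P c → R c c' → PathP R P c' c'' → PathP R P c c''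

/-- Running the excess frames `τ` (above the cut `π`), starting from store `σ`,
yields `σ'`, in big-step terms. -/
inductive SR (Γ : String → Stmt) : Store → List Frame → Store → Prop where
  | nil {σ} : SR Γ σ [] σ
  | seq {σ σ1 σ' s τ} : BigStep Γ σ s σ1 → SR Γ σ1 τ σ' →
      SR Γ σ (.seq s :: τ) σ'
  | ifT {σ σ' e τ} : e.eval σ ≠ 0 → SR Γ σ τ σ' → SR Γ σ (.ifTrue e :: τ) σ'
  | ifF {σ σ' e τ} : e.eval σ = 0 → SR Γ σ τ σ' → SR Γ σ (.ifFalse e :: τ) σ'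
  | loop1 {σ σ1 σ' e1 s1 s2 e2 τ} : BigLoop Γ σ e1 s1 s2 e2 σ1 → SR Γ σ1 τ σ' →
      SR Γ σ (.loop1 e1 s1 s2 e2 :: τ) σ'
  | loop2 {σ σ1 σ2 σ' e1 s1 s2 e2 τ} : e1.eval σ = 0 → BigStep Γ σ s1 σ1 →
      BigLoop Γ σ1 e1 s1 s2 e2 σ2 → SR Γ σ2 τ σ' →
      SR Γ σ (.loop2 e1 s1 s2 e2 :: τ) σ'

/-- Semantic invariant of a configuration relative to cut `π` and result `σ'`. -/
def Sem (Γ : String → Stmt) (π : List Frame) (σ' : Store) (c : Config) : Prop :=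
  ∃ τ σ1, c.stack = τ ++ π ∧ BigStep Γ c.store c.stmt σ1 ∧ SR Γ σ1 τ σ'

lemma sem_back {Γ : String → Stmt} {π : List Frame} {σ' : Store} {c c' : Config}
    (hP : ∃ τ, c.stack = τ ++ π) (hs : Step Γ c c') (h : Sem Γ π σ' c') :
    Sem Γ π σ' c := by
  obtain ⟨τ, σ1, hst, hbig, hsr⟩ := h
  obtain ⟨τc, hc⟩ := hP
  cases hs <;> simp only at hst hc
  case assVar =>
    cases hbig
    exact ⟨τ, _, hst, .assVar, hsr⟩
  case assArr =>
    cases hbig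
    exact ⟨τ, _, hst, .assArr, hsr⟩
  case call => exact ⟨τ, σ1, hst, .call hbig, hsr⟩
  case uncall => exact ⟨τ, σ1, hst, .uncall hbig, hsr⟩
  case seq1 =>
    cases τ with
    | nil =>
      simp only [List.nil_append] at hst
      rw [← hst] at hc
      have := congrArg List.length hc
      simp at this
      omega
    | cons f τ2 =>
      cases hst
      cases hsr with
      | seq hb2 hsr2 => exact ⟨τ2, _, rfl, .seq hbig hb2, hsr2⟩
  case seq2 =>
    exact ⟨_ :: τ, _, congrArg (List.cons _) hst, .skip, .seq hbig hsr⟩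
  case ifTrue1 he1 =>
    cases τ with
    | nil =>
      simp only [List.nil_append] at hst
      rw [← hst] at hc
      have := congrArg List.length hc
      simp at this
      omega
    | cons f τ2 =>
      cases hst
      cases hsr with
      | ifT he2 hsr2 => exact ⟨τ2, _, rfl, .ifTrue he1 hbig he2, hsr2⟩
  case ifTrue2 he2 =>
    cases hbig
    exact ⟨_ :: τ, _, congrArg (List.cons _) hst, .skip, .ifT he2 hsr⟩
  case ifFalse1 he1 =>
    cases τ with
    | nil =>
      simp only [List.nil_append] at hst
      rw [← hst] at hc
      have := congrArg List.length hc
      simp at this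
      omega
    | cons f τ2 =>
      cases hst
      cases hsr with
      | ifF he2 hsr2 => exact ⟨τ2, _, rfl, .ifFalse he1 hbig he2, hsr2⟩
  case ifFalse2 he2 =>
    cases hbig
    exact ⟨_ :: τ, _, congrArg (List.cons _) hst, .skip, .ifF he2 hsr⟩
  case loopMain he1 =>
    cases τ with
    | nil =>
      simp only [List.nil_append] at hst
      rw [← hst] at hc
      have := congrArg List.length hc
      simp at this
      omega
    | cons f τ2 =>
      cases hst
      cases hsr with
      | loop1 hl hsr2 => exact ⟨τ2, _, rfl, .loopMain he1 hbig hl, hsr2⟩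
  case loopBase he2 =>
    cases hbig
    exact ⟨_ :: τ, _, congrArg (List.cons _) hst, .skip, .loop1 (.base he2) hsr⟩
  case loop1 he2 =>
    cases τ with
    | nil =>
      simp only [List.nil_append] at hst
      rw [← hst] at hc
      cases τc with
      | nil => simp at hc
      | cons a b =>
        have := congrArg List.length hc
        simp at this
        omega
    | cons f τ2 =>
      cases hst
      cases hsr with
      | loop2 he1 hb1 hl hsr2 =>
        exact ⟨_ :: τ2, _, rfl, .skip, .loop1 (.step he2 hbig he1 hb1 hl) hsr2⟩
  case loop2 he1 =>
    cases τ with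
    | nil =>
      simp only [List.nil_append] at hst
      rw [← hst] at hc
      cases τc with
      | nil => simp at hc
      | cons a b =>
        have := congrArg List.length hc
        simp at this
        omega
    | cons f τ2 =>
      cases hst
      cases hsr with
      | loop1 hl hsr2 =>
        exact ⟨_ :: τ2, _, rfl, .skip, .loop2 he1 hbig hl hsr2⟩

lemma sem_path {Γ : String → Stmt} {π : List Frame} {σ' : Store} {c d : Config}
    (h : PathP (Step Γ) (fun c => ∃ τ, c.stack = τ ++ π) c d)
    (hd : d = ⟨σ', .skip, π⟩) : Sem Γ π σ' c := by
  induction h with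
  | refl c => subst hd; exact ⟨[], σ', rfl, .skip, .nil⟩
  | head hPc hstep _ ih => exact sem_back hPc hstep (ih hd)

/-- Soundness of balanced derivations: if
`⟨σ, s, π⟩ →* ⟨σ', skip, π⟩` is a balanced derivation (every intermediate stack
equals or extends `π`), then `⟨σ, s⟩ ⇓ σ'`. -/
theorem stmt5_soundness_balanced (Γ : String → Stmt) (σ σ' : Store) (s : Stmt)
    (π : List Frame)
    (h : PathP (Step Γ) (fun c => ∃ τ, c.stack = τ ++ π)
          ⟨σ, s, π⟩ ⟨σ', .skip, π⟩) :
    BigStep Γ σ s σ' := by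
  obtain ⟨τ, σ1, hst, hbig, hsr⟩ := sem_path h rfl
  simp only at hst
  have : τ = [] := by
    have := congrArg List.length hst
    simp at this
    cases τ with
    | nil => rfl
    | cons a b => simp at this
  subst this
  cases hsr
  exact hbig
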